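/- arXiv:1309.5798 — 3 statements merged into one kernel-verified Lean document; each statement's English description precedes it below -/
import Mathlib

section
/- For every real x > 1, ∑_{n ≤ x} 1/φ(n) < C₂ (1 + log x), where C₂ = ∏_p (1 + 1/(p(p−1))) (product over all primes p). -/
/-!
Since `n / φ(n) = ∑_{d ∣ n} μ(d)² / φ(d)`, the function `1/φ` is the Dirichlet convolution of
`f(d) = μ(d)² / (d φ(d))` with `m ↦ 1/m`. Hence `∑_{n ≤ x} 1/φ(n) = ∑_{d ≤ x} f(d) H(⌊x/d⌋)`
with `H` the harmonic sum, and `H(⌊x/d⌋) ≤ 1 + log x`. The multiplicative function `f` has Euler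
factors `1 + 1/(p(p-1))`, and it is summable because `d ≤ 2 φ(d)²` for squarefree `d`; so its
total sum is `C₂`, which every finite partial sum misses by a positive term `f(q)`, `q` prime.
-/

noncomputable def C₂ : ℝ := ∏' p : Nat.Primes, (1 + 1 / ((p : ℝ) * ((p : ℝ) - 1)))

open Finset ArithmeticFunction
open scoped ArithmeticFunction.Moebius

theorem Nat.Prime.le_sub_one_sq {p : ℕ} (hp : p.Prime) (hp2 : p ≠ 2) : p ≤ (p - 1) ^ 2 := by
  obtain ⟨q, rfl⟩ : ∃ q, p = q + 3 := ⟨p - 3, by have := hp.two_le; omega⟩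
  rw [show q + 3 - 1 = q + 2 by omega]
  nlinarith

theorem Squarefree.totient_eq_prod_primeFactors_sub_one {n : ℕ} (hn : Squarefree n) :
    n.totient = ∏ p ∈ n.primeFactors, (p - 1) := by
  have h := Nat.totient_mul_prod_primeFactors n
  rw [Nat.prod_primeFactors_of_squarefree hn, mul_comm] at h
  exact Nat.eq_of_mul_eq_mul_left (Nat.pos_of_ne_zero hn.ne_zero) h

theorem Squarefree.le_two_mul_totient_sq {n : ℕ} (hn : Squarefree n) :
    n ≤ 2 * n.totient ^ 2 := by
  have hodd : ∀ s ⊆ n.primeFactors, 2 ∉ s → ∏ p ∈ s, p ≤ ∏ p ∈ s, (p - 1) ^ 2 := fun s hs h2 ↦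
    prod_le_prod' fun p hp ↦ (Nat.prime_of_mem_primeFactors (hs hp)).le_sub_one_sq
      (ne_of_mem_of_not_mem hp h2)
  rw [hn.totient_eq_prod_primeFactors_sub_one, ← prod_pow]
  conv_lhs => rw [← Nat.prod_primeFactors_of_squarefree hn]
  by_cases h2 : 2 ∈ n.primeFactors
  · rw [← mul_prod_erase _ _ h2, ← mul_prod_erase _ (fun p ↦ (p - 1) ^ 2) h2,
      show (2 - 1) ^ 2 = 1 from rfl, one_mul]
    exact Nat.mul_le_mul_left 2 (hodd _ (erase_subset _ _) (notMem_erase 2 _))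
  · exact (hodd _ subset_rfl h2).trans (Nat.le_mul_of_pos_left _ two_pos)

noncomputable def invTotient : ArithmeticFunction ℝ := ⟨fun n ↦ 1 / (n.totient : ℝ), by simp⟩

noncomputable def invNat : ArithmeticFunction ℝ := ⟨fun n ↦ 1 / (n : ℝ), by simp⟩

noncomputable def moebiusSqDivMulTotient : ArithmeticFunction ℝ :=
  ⟨fun d ↦ (μ d : ℝ) ^ 2 / (d * d.totient), by simp⟩

@[simp] theorem invTotient_apply (n : ℕ) : invTotient n = 1 / (n.totient : ℝ) := rfl

@[simp] theorem invNat_apply (n : ℕ) : invNat n = 1 / (n : ℝ) := rfl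

@[simp] theorem moebiusSqDivMulTotient_apply (d : ℕ) :
    moebiusSqDivMulTotient d = (μ d : ℝ) ^ 2 / (d * d.totient) := rfl

theorem isMultiplicative_invTotient : invTotient.IsMultiplicative :=
  ⟨by simp, fun {m n} h ↦ by simp only [invTotient_apply, Nat.totient_mul h]; push_cast; ring⟩

theorem isMultiplicative_invNat : invNat.IsMultiplicative :=
  ⟨by simp, fun {m n} _ ↦ by simp only [invNat_apply]; push_cast; ring⟩

theorem isMultiplicative_moebiusSqDivMulTotient : moebiusSqDivMulTotient.IsMultiplicative := by
  refine ⟨by simp, fun {m n} h ↦ ?_⟩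
  simp only [moebiusSqDivMulTotient_apply, isMultiplicative_moebius.map_mul_of_coprime h,
    Nat.totient_mul h]
  push_cast
  ring

theorem moebiusSqDivMulTotient_nonneg (d : ℕ) : 0 ≤ moebiusSqDivMulTotient d := by
  simp only [moebiusSqDivMulTotient_apply]; positivity

theorem moebiusSqDivMulTotient_apply_prime {p : ℕ} (hp : p.Prime) :
    moebiusSqDivMulTotient p = 1 / ((p : ℝ) * ((p : ℝ) - 1)) := by
  simp [moebiusSqDivMulTotient_apply, moebius_apply_prime hp, Nat.totient_prime hp,
    Nat.cast_sub hp.one_le]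

theorem moebiusSqDivMulTotient_apply_prime_pow {p k : ℕ} (hp : p.Prime) (hk : 2 ≤ k) :
    moebiusSqDivMulTotient (p ^ k) = 0 := by
  have : ¬Squarefree (p ^ k) := by
    rw [Nat.squarefree_pow_iff hp.ne_one (by omega)]; omega
  simp [moebiusSqDivMulTotient_apply, moebius_eq_zero_of_not_squarefree this]

theorem moebiusSqDivMulTotient_le (d : ℕ) :
    moebiusSqDivMulTotient d ≤ √2 / (d : ℝ) ^ ((3 : ℝ) / 2) := by
  rcases eq_or_ne d 0 with rfl | hd0
  · simp
  by_cases hd : Squarefree d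
  · have hd_pos : (0 : ℝ) < d := by positivity
    have htot_pos : (0 : ℝ) < d.totient := by exact_mod_cast Nat.totient_pos.mpr (by omega)
    have hsqrt : √d ≤ √2 * d.totient := by
      rw [← Real.sqrt_sq htot_pos.le, ← Real.sqrt_mul zero_le_two]
      exact Real.sqrt_le_sqrt (by exact_mod_cast hd.le_two_mul_totient_sq)
    have hpow : (d : ℝ) ^ ((3 : ℝ) / 2) = d * √d := by
      rw [Real.sqrt_eq_rpow, ← Real.rpow_one_add' hd_pos.le (by norm_num)]
      norm_num
    rw [moebiusSqDivMulTotient_apply, ← Int.cast_pow, moebius_sq_eq_one_of_squarefree hd, hpow,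
      Int.cast_one, div_le_div_iff₀ (by positivity) (by positivity)]
    nlinarith
  · rw [moebiusSqDivMulTotient_apply, moebius_eq_zero_of_not_squarefree hd, Int.cast_zero,
      zero_pow two_ne_zero, zero_div]
    positivity

theorem summable_moebiusSqDivMulTotient : Summable moebiusSqDivMulTotient := by
  refine .of_nonneg_of_le moebiusSqDivMulTotient_nonneg moebiusSqDivMulTotient_le ?_
  simpa [div_eq_mul_inv] using
    (Real.summable_one_div_nat_rpow.mpr (by norm_num : (1 : ℝ) < 3 / 2)).mul_left √2

theorem tsum_moebiusSqDivMulTotient : ∑' d, moebiusSqDivMulTotient d = C₂ := by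
  rw [← isMultiplicative_moebiusSqDivMulTotient.eulerProduct_tprod
    summable_moebiusSqDivMulTotient.abs]
  refine tprod_congr fun ⟨p, hp⟩ ↦ ?_
  have hvanish : ∀ k ∉ ({0, 1} : Finset ℕ), moebiusSqDivMulTotient (p ^ k) = 0 := fun k hk ↦
    moebiusSqDivMulTotient_apply_prime_pow hp <| by
      simp only [mem_insert, mem_singleton, not_or] at hk; omega
  rw [tsum_eq_sum hvanish, sum_pair zero_ne_one, pow_zero, pow_one,
    isMultiplicative_moebiusSqDivMulTotient.map_one, moebiusSqDivMulTotient_apply_prime hp]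

theorem moebiusSqDivMulTotient_mul_invNat : moebiusSqDivMulTotient * invNat = invTotient := by
  refine (IsMultiplicative.eq_iff_eq_on_prime_powers _
    (isMultiplicative_moebiusSqDivMulTotient.mul isMultiplicative_invNat) _
    isMultiplicative_invTotient).mpr fun p k hp ↦ ?_
  rcases k with _ | k
  · simp
  have hp0 : (p : ℝ) ≠ 0 := by exact_mod_cast hp.ne_zero
  have hp1 : (p : ℝ) - 1 ≠ 0 := sub_ne_zero.mpr (by exact_mod_cast hp.one_lt.ne')
  rw [mul_apply, Nat.sum_divisorsAntidiagonal (fun a b ↦ moebiusSqDivMulTotient a * invNat b),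
    Nat.sum_divisors_prime_pow hp, sum_range_succ', sum_range_succ',
    sum_eq_zero fun i _ ↦ by rw [moebiusSqDivMulTotient_apply_prime_pow hp (by omega), zero_mul]]
  rw [zero_add, pow_one, pow_zero, Nat.div_one, pow_succ, Nat.mul_div_cancel _ hp.pos,
    moebiusSqDivMulTotient_apply_prime hp, isMultiplicative_moebiusSqDivMulTotient.map_one,
    invNat_apply, invNat_apply, invTotient_apply, ← pow_succ, Nat.totient_prime_pow_succ hp]
  push_cast [Nat.cast_sub hp.one_le]
  field_simp
  ring

theorem sum_moebiusSqDivMulTotient_lt (s : Finset ℕ) : ∑ d ∈ s, moebiusSqDivMulTotient d < C₂ := by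
  obtain ⟨q, hq, hqs⟩ := Nat.infinite_setOfPred_prime.exists_notMem_finset s
  have hq_pos : 0 < moebiusSqDivMulTotient q := by
    have : (1 : ℝ) < q := by exact_mod_cast hq.one_lt
    rw [moebiusSqDivMulTotient_apply_prime hq]
    exact one_div_pos.mpr (by nlinarith)
  calc ∑ d ∈ s, moebiusSqDivMulTotient d < ∑ d ∈ insert q s, moebiusSqDivMulTotient d := by
        rw [sum_insert hqs]; linarith
    _ ≤ ∑' d, moebiusSqDivMulTotient d := summable_moebiusSqDivMulTotient.sum_le_tsum _
        fun d _ ↦ moebiusSqDivMulTotient_nonneg d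
    _ = C₂ := tsum_moebiusSqDivMulTotient

theorem sum_Ioc_invNat_le_one_add_log {M : ℕ} {x : ℝ} (hM : 0 < M) (hMx : (M : ℝ) ≤ x) :
    ∑ m ∈ Ioc 0 M, invNat m ≤ 1 + Real.log x :=
  calc ∑ m ∈ Ioc 0 M, invNat m = harmonic M := by
        simp [harmonic_eq_sum_Icc, ← Icc_add_one_left_eq_Ioc]
    _ ≤ 1 + Real.log M := harmonic_le_one_add_log M
    _ ≤ 1 + Real.log x := by gcongr

/-- For every real `x > 1`, `∑_{n ≤ x} 1/φ(n) < C₂ (1 + log x)`. -/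
theorem sum_one_div_totient_lt (x : ℝ) (hx : 1 < x) :
    ∑ n ∈ Finset.Icc 1 ⌊x⌋₊, (1 : ℝ) / (Nat.totient n : ℝ) < C₂ * (1 + Real.log x) := by
  set N := ⌊x⌋₊
  have hNx : (N : ℝ) ≤ x := Nat.floor_le (by linarith)
  have hlog : 0 < 1 + Real.log x := by linarith [Real.log_pos hx]
  calc ∑ n ∈ Icc 1 N, (1 : ℝ) / n.totient
      = ∑ n ∈ Ioc 0 N, (moebiusSqDivMulTotient * invNat) n := by
        rw [moebiusSqDivMulTotient_mul_invNat, ← Icc_add_one_left_eq_Ioc]; rfl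
    _ = ∑ d ∈ Ioc 0 N, moebiusSqDivMulTotient d * ∑ m ∈ Ioc 0 (N / d), invNat m :=
        sum_Ioc_mul_eq_sum_sum _ _ _
    _ ≤ ∑ d ∈ Ioc 0 N, moebiusSqDivMulTotient d * (1 + Real.log x) := by
        refine sum_le_sum fun d hd ↦
          mul_le_mul_of_nonneg_left ?_ (moebiusSqDivMulTotient_nonneg d)
        obtain ⟨hd0, hdN⟩ := mem_Ioc.mp hd
        exact sum_Ioc_invNat_le_one_add_log (Nat.div_pos hdN hd0)
          (le_trans (by exact_mod_cast Nat.div_le_self N d) hNx)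
    _ < C₂ * (1 + Real.log x) := by
        rw [← sum_mul]
        exact mul_lt_mul_of_pos_right (sum_moebiusSqDivMulTotient_lt _) hlog
end

section
/- For every real x > 1, the number of primes not exceeding x satisfies π(x) < 2x/log x. -/
/-!
Chebyshev's binomial argument. For `m = ⌈n/2⌉`, every prime in `(m, n]` divides
`n.choose m ≤ 2 ^ n`, so there are at most `n log 2 / log (m + 1)` of them. Combined with
`π(m) log m < 2m` (strong induction) and the crude sieve bound `π(n) ≤ n/3 + 3`, this gives
`π(n) log n < 2n` once `n ≥ 41`; below that the inequality is checked directly.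
Passing from `⌊x⌋` to `x` only costs `log x - log ⌊x⌋ ≤ (x - ⌊x⌋) / ⌊x⌋`.
-/

open Finset
open scoped Nat.Prime

theorem Real.log_le_log_add_sub_div {a b : ℝ} (ha : 0 < a) (hb : 0 < b) :
    Real.log b ≤ Real.log a + (b - a) / a := by
  have h := Real.log_le_sub_one_of_pos (div_pos hb ha)
  rw [Real.log_div hb.ne' ha.ne', div_sub_one ha.ne'] at h
  linarith

namespace Nat

theorem three_mul_primeCounting_le (n : ℕ) : 3 * π n ≤ n + 9 := by
  rcases lt_or_ge n 6 with hn | hn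
  · have : π n ≤ π 6 := monotone_primeCounting hn.le
    have : π 6 = 3 := by decide
    omega
  · obtain ⟨r, rfl⟩ := Nat.exists_eq_add_of_le hn
    have h := primeCounting_add_le (a := 6) (k := 6) (by norm_num) le_rfl r
    have h6 : π 6 = 3 := by decide
    rw [h6, show totient 6 = 2 by decide] at h
    omega

theorem pow_primeCounting_sub_le_two_pow {m n : ℕ} (hmn : m ≤ n) (hn : n ≤ 2 * m) :
    (m + 1) ^ (π n - π m) ≤ 2 ^ n := by
  set S := primesLE n \ primesLE m
  have hS : ∀ p ∈ S, p.Prime ∧ m < p ∧ p ≤ n := fun p hp => by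
    simp only [S, mem_sdiff, mem_primesLE] at hp
    obtain ⟨⟨hpn, hp⟩, hpm⟩ := hp
    exact ⟨hp, lt_of_not_ge fun h => hpm ⟨h, hp⟩, hpn⟩
  calc (m + 1) ^ (π n - π m) = (m + 1) ^ #S := by
        rw [card_sdiff_of_subset (primesLE_mono hmn), primesLE_card_eq_primeCounting,
          primesLE_card_eq_primeCounting]
    _ ≤ ∏ p ∈ S, p := pow_card_le_prod _ _ _ fun p hp => (hS p hp).2.1
    _ ≤ n.choose m := by
        refine le_of_dvd (choose_pos hmn) (prod_primes_dvd _ (fun p hp => (hS p hp).1.prime) ?_)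
        intro p hp
        obtain ⟨hp, hmp, hpn⟩ := hS p hp
        exact hp.dvd_choose hmp (by omega) hpn
    _ ≤ 2 ^ n := choose_le_two_pow n m

theorem primeCounting_mul_log_lt_of_half {m n : ℕ} (hn41 : 41 ≤ n) (hn : n ≤ 2 * m)
    (hm : 2 * m ≤ n + 1) (ih : π m * Real.log m < 2 * m) : π n * Real.log n < 2 * n := by
  set k := π n - π m
  have hm0 : (0 : ℝ) < m := by norm_cast; omega
  have hsplit : (π n : ℝ) ≤ π m + k := by norm_cast; omega
  have hk : k * Real.log (m + 1) ≤ n * Real.log 2 := by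
    have h := pow_primeCounting_sub_le_two_pow (by omega : m ≤ n) hn
    have := Real.log_le_log (by positivity) (by exact_mod_cast h : ((m : ℝ) + 1) ^ k ≤ 2 ^ n)
    rwa [Real.log_pow, Real.log_pow] at this
  have hlog_n : Real.log n ≤ Real.log 2 + Real.log m := by
    rw [← Real.log_mul two_ne_zero hm0.ne']
    exact Real.log_le_log (by norm_cast; omega) (by exact_mod_cast hn)
  have hsieve : (π n : ℝ) ≤ n / 3 + 3 := by
    have : (3 * π n : ℝ) ≤ n + 9 := by exact_mod_cast three_mul_primeCounting_le n
    linarith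
  have hm' : (2 * m : ℝ) ≤ n + 1 := by exact_mod_cast hm
  have hn41' : (41 : ℝ) ≤ n := by exact_mod_cast hn41
  calc π n * Real.log n ≤ π n * Real.log 2 + π n * Real.log m := by
        rw [← mul_add]; gcongr
    _ ≤ (n / 3 + 3) * Real.log 2 + (π m + k) * Real.log m := by gcongr
    _ ≤ (n / 3 + 3) * Real.log 2 + π m * Real.log m + k * Real.log (m + 1) := by
        have := Real.log_le_log hm0 (by linarith : (m : ℝ) ≤ m + 1)
        linarith [mul_le_mul_of_nonneg_left this (Nat.cast_nonneg (α := ℝ) k)]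
    _ < (4 * n / 3 + 3) * Real.log 2 + (n + 1) := by linarith
    -- `41` is the least threshold for which this last step holds.
    _ ≤ 2 * n := by nlinarith [Real.log_two_lt_d9]

theorem pow_primeCounting_le_two_pow_of_lt {n : ℕ} (hn : n < 41) : n ^ π n ≤ 2 ^ (2 * n) := by
  revert n
  decide

theorem primeCounting_mul_log_lt (n : ℕ) (hn : 1 ≤ n) : π n * Real.log n < 2 * n := by
  induction n using Nat.strong_induction_on with
  | _ n ih =>
  rcases lt_or_ge n 41 with hn41 | hn41
  · have hpow := pow_primeCounting_le_two_pow_of_lt hn41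
    have h := Real.log_le_log (by positivity)
      (by exact_mod_cast hpow : (n : ℝ) ^ π n ≤ 2 ^ (2 * n))
    rw [Real.log_pow, Real.log_pow] at h
    have : (0 : ℝ) < n := by exact_mod_cast hn
    push_cast at h
    nlinarith [Real.log_two_lt_d9]
  · exact primeCounting_mul_log_lt_of_half (m := (n + 1) / 2) hn41 (by omega) (by omega)
      (ih _ (by omega) (by omega))

end Nat

/-- For every real `x > 1`, the number of primes not exceeding `x` satisfies
`π(x) < 2x / log x`. -/
theorem primeCounting_lt_two_mul_div_log (x : ℝ) (hx : 1 < x) :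
    (Nat.primeCounting ⌊x⌋₊ : ℝ) < 2 * x / Real.log x := by
  rw [lt_div_iff₀ (Real.log_pos hx)]
  set n := ⌊x⌋₊
  have hn : 1 ≤ n := Nat.le_floor (by exact_mod_cast hx.le)
  have hn0 : (0 : ℝ) < n := by exact_mod_cast hn
  have hnx : (n : ℝ) ≤ x := Nat.floor_le (by linarith)
  have hlog := Real.log_le_log_add_sub_div hn0 (hn0.trans_le hnx)
  have hπ : (Nat.primeCounting n : ℝ) ≤ 2 * n := by
    have : Nat.primeCounting n ≤ n + 1 := Nat.count_le _
    exact_mod_cast (by omega : Nat.primeCounting n ≤ 2 * n)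
  have hπ0 : (0 : ℝ) ≤ Nat.primeCounting n := Nat.cast_nonneg _
  have htail : (Nat.primeCounting n : ℝ) * ((x - n) / n) ≤ 2 * (x - n) := by
    rw [mul_div_assoc', div_le_iff₀ hn0]
    nlinarith
  nlinarith [mul_le_mul_of_nonneg_left hlog hπ0, Nat.primeCounting_mul_log_lt n hn]
end

section
/- For every real x ≥ 1, the number Q(x) of squarefree integers n with 1 ≤ n ≤ x satisfies |Q(x) − x/ζ(2)| ≤ 2√x. -/
open Finset ArithmeticFunction
open scoped ArithmeticFunction.Moebius

/-! Writing the indicator of squarefreeness as `∑_{d² ∣ n} μ(d)` gives the exact formula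
`Q(x) = ∑_{d ≤ √x} μ(d) ⌊x/d²⌋`. Replacing each floor by `x/d²` costs at most `1` per term, so at
most `D = ⌊√x⌋` in all, and completing `∑_{d ≤ D} μ(d)/d²` to `1/ζ(2)` costs at most
`x ∑_{d > D} 1/d² ≤ x/(D + 1/2)`, by telescoping `1/(t + 1/2)² ≤ 1/t - 1/(t + 1)`.
Finally `D + x/(D + 1/2) ≤ 2√x` as soon as `D ≤ √x < D + 1`. -/

theorem Nat.sq_dvd_sq_mul_iff_dvd {a b d : ℕ} (ha : Squarefree a) (hb : b ≠ 0) :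
    d ^ 2 ∣ b ^ 2 * a ↔ d ∣ b := by
  refine ⟨fun h ↦ ?_, fun h ↦ (pow_dvd_pow_of_dvd h 2).mul_right a⟩
  have hd : d ≠ 0 := by rintro rfl; simp [hb, ha.ne_zero] at h
  rw [← Nat.factorization_le_iff_dvd hd hb]
  intro p
  have hp := (Nat.factorization_le_iff_dvd (by positivity) (by simp [hb, ha.ne_zero])).2 h p
  simp only [Nat.factorization_mul (pow_ne_zero 2 hb) ha.ne_zero, Nat.factorization_pow,
    Finsupp.coe_add, Finsupp.coe_smul, Pi.add_apply, Pi.smul_apply, smul_eq_mul] at hp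
  have := ha.natFactorization_le_one p
  omega

theorem sum_moebius_filter_sq_dvd {n D : ℕ} (hn : 0 < n) (hnD : n < (D + 1) ^ 2) :
    ∑ d ∈ range (D + 1) with d ^ 2 ∣ n, μ d = if Squarefree n then 1 else 0 := by
  obtain ⟨a, b, ha₀, hb, rfl, ha⟩ := Nat.sq_mul_squarefree_of_pos hn
  have hbD : b ≤ D := by
    have := lt_of_pow_lt_pow_left₀ 2 (Nat.zero_le _) ((Nat.le_mul_of_pos_right _ ha₀).trans_lt hnD)
    omega
  have hfilter : {d ∈ range (D + 1) | d ^ 2 ∣ b ^ 2 * a} = b.divisors := by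
    ext d
    simp only [mem_filter, mem_range, Nat.mem_divisors, Nat.sq_dvd_sq_mul_iff_dvd ha hb.ne']
    exact ⟨fun h ↦ ⟨h.2, hb.ne'⟩, fun h ↦ ⟨(Nat.le_of_dvd hb h.1).trans_lt (by omega), h.1⟩⟩
  have hsum : ∑ d ∈ b.divisors, μ d = if b = 1 then 1 else 0 := by
    simpa only [coe_mul_zeta_apply, one_apply] using congr($moebius_mul_coe_zeta b)
  have hsquarefree : Squarefree (b ^ 2 * a) ↔ b = 1 :=
    ⟨fun h ↦ Nat.isUnit_iff.1 (h b ⟨a, by ring⟩), by rintro rfl; simpa using ha⟩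
  rw [hfilter, hsum]
  simp only [hsquarefree]

theorem card_filter_squarefree_Icc_eq_sum_moebius {N D : ℕ} (hND : N < (D + 1) ^ 2) :
    (#{n ∈ Icc 1 N | Squarefree n} : ℤ) = ∑ d ∈ range (D + 1), μ d * (N / d ^ 2 : ℕ) := by
  calc (#{n ∈ Icc 1 N | Squarefree n} : ℤ)
      = ∑ n ∈ Icc 1 N, ∑ d ∈ range (D + 1) with d ^ 2 ∣ n, μ d := by
        rw [← sum_boole]
        refine sum_congr rfl fun n hn ↦ ?_
        rw [mem_Icc] at hn
        exact (sum_moebius_filter_sq_dvd hn.1 (hn.2.trans_lt hND)).symm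
    _ = ∑ d ∈ range (D + 1), μ d * #{n ∈ Icc 1 N | d ^ 2 ∣ n} := by
        simp_rw [sum_filter]
        rw [sum_comm]
        refine sum_congr rfl fun d _ ↦ ?_
        rw [← sum_filter, sum_const, nsmul_eq_mul, mul_comm]
    _ = ∑ d ∈ range (D + 1), μ d * (N / d ^ 2 : ℕ) := by
        simp_rw [show Icc 1 N = Ioc 0 N from Icc_add_one_left_eq_Ioc 0 N,
          Nat.Ioc_filter_dvd_card_eq_div]

theorem card_filter_squarefree_Icc_floor_eq_sum_moebius {x : ℝ} (hx : 0 ≤ x) {D : ℕ}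
    (hxD : x < (D + 1) ^ 2) :
    (#{n ∈ Icc 1 ⌊x⌋₊ | Squarefree n} : ℝ) =
      ∑ d ∈ range (D + 1), (μ d : ℝ) * ⌊x / (d : ℝ) ^ 2⌋₊ := by
  have hND : ⌊x⌋₊ < (D + 1) ^ 2 := by rw [Nat.floor_lt hx]; exact_mod_cast hxD
  have h := congrArg (Int.cast : ℤ → ℝ) (card_filter_squarefree_Icc_eq_sum_moebius hND)
  push_cast [← Nat.floor_div_natCast] at h
  exact h

theorem hasSum_moebius_div_sq :
    HasSum (fun d : ℕ ↦ (μ d : ℝ) / (d : ℝ) ^ 2) (Real.pi ^ 2 / 6)⁻¹ := by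
  have hs : 1 < (2 : ℂ).re := by norm_num
  have hL : LSeries (fun n ↦ (μ n : ℂ)) 2 = ((Real.pi ^ 2 / 6)⁻¹ : ℝ) := by
    have h := LSeries_zeta_mul_Lseries_moebius hs
    rw [LSeries_zeta_eq_riemannZeta hs, riemannZeta_two] at h
    push_cast
    exact eq_inv_of_mul_eq_one_right h
  have hsum := (LSeriesSummable_moebius_iff.2 hs).LSeriesHasSum
  rw [hL] at hsum
  refine Complex.hasSum_ofReal.1 (hsum.congr_fun fun d ↦ ?_)
  rcases eq_or_ne d 0 with rfl | hd
  · simp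
  · simp [LSeries.term_of_ne_zero hd]

theorem one_div_add_half_sq_le {t : ℝ} (ht : 0 < t) :
    1 / (t + 1 / 2) ^ 2 ≤ 1 / t - 1 / (t + 1) := by
  rw [div_sub_div _ _ ht.ne' (by positivity), div_le_div_iff₀ (by positivity) (by positivity)]
  nlinarith

theorem sum_range_one_div_add_half_sq_le {c : ℝ} (hc : 0 < c) (n : ℕ) :
    ∑ i ∈ range n, 1 / (c + 1 / 2 + i) ^ 2 ≤ 1 / c := by
  calc ∑ i ∈ range n, 1 / (c + 1 / 2 + i) ^ 2
      ≤ ∑ i ∈ range n, (1 / (c + i) - 1 / (c + (i + 1 : ℕ))) :=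
        sum_le_sum fun i _ ↦ by
          simpa [add_right_comm, add_assoc] using one_div_add_half_sq_le (by positivity : 0 < c + i)
    _ = 1 / c - 1 / (c + n) := by simpa using sum_range_sub' (fun i : ℕ ↦ 1 / (c + i)) n
    _ ≤ 1 / c := sub_le_self _ (by positivity)

theorem abs_sub_sum_range_div_sq_le {f : ℕ → ℝ} {L : ℝ}
    (hL : HasSum (fun n : ℕ ↦ f n / (n : ℝ) ^ 2) L) (hf : ∀ n, |f n| ≤ 1) (D : ℕ) :
    |L - ∑ n ∈ range (D + 1), f n / (n : ℝ) ^ 2| ≤ 1 / (D + 1 / 2) := by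
  rw [← hL.tsum_eq, ← hL.summable.sum_add_tsum_nat_add (D + 1), add_sub_cancel_left]
  set tail := fun i : ℕ ↦ f (i + (D + 1)) / ((i + (D + 1) : ℕ) : ℝ) ^ 2
  have hterm (i : ℕ) : |tail i| ≤ 1 / ((D + 1 / 2 : ℝ) + 1 / 2 + i) ^ 2 := by
    have hcast : (D + 1 / 2 : ℝ) + 1 / 2 + i = ((i + (D + 1) : ℕ) : ℝ) := by push_cast; ring
    rw [hcast, abs_div, abs_of_nonneg (sq_nonneg ((i + (D + 1) : ℕ) : ℝ))]
    exact div_le_div_of_nonneg_right (hf _) (sq_nonneg _)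
  have hpartial (n : ℕ) : ∑ i ∈ range n, |tail i| ≤ 1 / (D + 1 / 2) :=
    (sum_le_sum fun i _ ↦ hterm i).trans (sum_range_one_div_add_half_sq_le (by positivity) n)
  calc |∑' i, tail i| ≤ ∑' i, |tail i| :=
        norm_tsum_le_tsum_norm (f := tail)
          (summable_of_sum_range_le (fun _ ↦ abs_nonneg _) hpartial)
    _ ≤ 1 / (D + 1 / 2) := Real.tsum_le_of_sum_range_le (fun _ ↦ abs_nonneg _) hpartial

theorem abs_sum_moebius_mul_floor_sub_le (x : ℝ) (hx : 0 ≤ x) (D : ℕ) :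
    |∑ d ∈ range (D + 1), (μ d : ℝ) * (⌊x / (d : ℝ) ^ 2⌋₊ - x / (d : ℝ) ^ 2)| ≤ D := by
  rw [sum_range_succ']
  simp only [ArithmeticFunction.map_zero, Int.cast_zero, zero_mul, add_zero]
  calc _ ≤ ∑ d ∈ range D, (1 : ℝ) := by
        refine (abs_sum_le_sum_abs _ _).trans (sum_le_sum fun d _ ↦ ?_)
        rw [abs_mul]
        exact mul_le_one₀ (mod_cast abs_moebius_le_one) (abs_nonneg _)
          (Nat.abs_floor_sub_le (div_nonneg hx (sq_nonneg _)))
    _ = D := by simp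

theorem add_sq_div_add_half_le_two_mul {D s : ℝ} (hD : 0 ≤ D) (hDs : D ≤ s) (hsD : s < D + 1) :
    D + s ^ 2 / (D + 1 / 2) ≤ 2 * s := by
  rw [← le_sub_iff_add_le', div_le_iff₀ (by positivity)]
  nlinarith

/-- For every real `x ≥ 1`, the number `Q(x)` of squarefree integers `1 ≤ n ≤ x`
satisfies `|Q(x) - x/ζ(2)| ≤ 2√x`, where `ζ(2) = π²/6`. -/
theorem squarefree_count_sub_div_zeta_two_abs_le (x : ℝ) (hx : 1 ≤ x) :
    |(((Finset.Icc 1 ⌊x⌋₊).filter Squarefree).card : ℝ) - x / (Real.pi ^ 2 / 6)| ≤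
      2 * Real.sqrt x := by
  have hx₀ : 0 ≤ x := zero_le_one.trans hx
  set D := ⌊√x⌋₊
  have hDs : (D : ℝ) ≤ √x := Nat.floor_le (Real.sqrt_nonneg x)
  have hsD : √x < D + 1 := Nat.lt_floor_add_one _
  have hsplit : (#{n ∈ Icc 1 ⌊x⌋₊ | Squarefree n} : ℝ) - x / (Real.pi ^ 2 / 6) =
      ∑ d ∈ range (D + 1), (μ d : ℝ) * (⌊x / (d : ℝ) ^ 2⌋₊ - x / (d : ℝ) ^ 2) -
        x * ((Real.pi ^ 2 / 6)⁻¹ - ∑ d ∈ range (D + 1), (μ d : ℝ) / (d : ℝ) ^ 2) := by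
    rw [card_filter_squarefree_Icc_floor_eq_sum_moebius hx₀ (Real.lt_sq_of_sqrt_lt hsD),
      div_eq_mul_inv, mul_sub, mul_sum]
    simp only [mul_sub, sum_sub_distrib, mul_div_left_comm x]
    ring
  have htail := abs_sub_sum_range_div_sq_le hasSum_moebius_div_sq
    (fun n ↦ mod_cast abs_moebius_le_one) D
  calc _ ≤ |∑ d ∈ range (D + 1), (μ d : ℝ) * (⌊x / (d : ℝ) ^ 2⌋₊ - x / (d : ℝ) ^ 2)| +
        x * |(Real.pi ^ 2 / 6)⁻¹ - ∑ d ∈ range (D + 1), (μ d : ℝ) / (d : ℝ) ^ 2| := by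
        rw [hsplit]
        refine (abs_sub _ _).trans_eq ?_
        rw [abs_mul, abs_of_nonneg hx₀]
    _ ≤ D + x * (1 / (D + 1 / 2)) :=
        add_le_add (abs_sum_moebius_mul_floor_sub_le x hx₀ D) (mul_le_mul_of_nonneg_left htail hx₀)
    _ = D + √x ^ 2 / (D + 1 / 2) := by rw [Real.sq_sqrt hx₀, mul_one_div]
    _ ≤ 2 * √x := add_sq_div_add_half_le_two_mul (Nat.cast_nonneg D) hDs hsD
end
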